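/- arXiv:2105.12863 — 2 statements merged into one kernel-verified Lean document; each statement's English description precedes it below -/
import Mathlib

section
/- The polynomial $z_0 z_1 \cdots z_n - (1 + u_1 + \cdots + u_m)$ is irreducible in the ring $\mathbb{C}[z_0,\ldots,z_n,u_1^{\pm 1},\ldots,u_m^{\pm 1}]$ (for $m \geq 1$), and hence the coordinate ring $\mathbb{C}[z_0,\ldots,z_n,u_1^{\pm 1},\ldots,u_m^{\pm 1}]/(z_0\cdots z_n - 1 - u_1 - \cdots - u_m)$ is an integral domain. -/
open Polynomial in
theorem my_cancel_prime {S : Type*} [CommRing S] [IsDomain S] {π : S} (hπ : Prime π) {p u v : S[X]}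
    (hnd : ¬ (C π ∣ p)) (h : C π * u = p * v) : ∃ w, u = p * w := by
  have hCπ : Prime (C π) := Polynomial.prime_C_iff.mpr hπ
  have hdvd : C π ∣ p * v := ⟨u, h.symm⟩
  rcases hCπ.2.2 _ _ hdvd with h1 | h1
  · exact absurd h1 hnd
  · obtain ⟨w, rfl⟩ := h1
    refine ⟨w, ?_⟩
    have hc : C π * u = C π * (p * w) := by rw [h]; ring
    exact mul_left_cancel₀ hCπ.ne_zero hc

open Polynomial in
theorem my_multiset_cancel {S : Type*} [CommRing S] [IsDomain S] (p : S[X]) (M : Multiset S)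
    (hM : ∀ π ∈ M, Prime π ∧ ¬ C π ∣ p) :
    ∀ u v : S[X], C M.prod * u = p * v → p ∣ u := by
  induction M using Multiset.induction with
  | empty => intro u v h; rw [Multiset.prod_zero, map_one, one_mul] at h; exact ⟨v, h⟩
  | cons π M ih =>
    intro u v h
    obtain ⟨hπ, hnd⟩ := hM π (Multiset.mem_cons_self _ _)
    rw [Multiset.prod_cons, map_mul, mul_assoc] at h
    obtain ⟨w, hw⟩ := my_cancel_prime hπ hnd h
    exact ih (fun π hmem => hM π (Multiset.mem_cons_of_mem hmem)) u w hw

open Polynomial in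
/-- If `b` is a product of primes, none of which divides `s`, then `b•X - s` is prime. -/
theorem my_prime_linear {S : Type*} [CommRing S] [IsDomain S] {ι : Type*} [Fintype ι]
    (q : ι → S) (hq : ∀ i, Prime (q i)) (s : S) (hs : ∀ i, ¬ q i ∣ s) :
    Prime (C (∏ i, q i) * X - C s) := by
  set b : S := ∏ i, q i with hbdef
  have hb : b ≠ 0 := Finset.prod_ne_zero_iff.mpr fun i _ => (hq i).ne_zero
  set p : S[X] := C b * X - C s with hpdef
  have hdeg : p.natDegree = 1 := by
    rw [hpdef, natDegree_sub_C, natDegree_C_mul_X _ hb]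
  have hp0 : p ≠ 0 := fun h => by simp [h] at hdeg
  have hnd : ∀ i, ¬ C (q i) ∣ p := by
    intro i hdvd
    have h0 : q i ∣ p.coeff 0 := (Polynomial.C_dvd_iff_dvd_coeff _ _).mp hdvd 0
    rw [hpdef] at h0
    simp only [coeff_sub, coeff_C_mul, coeff_X_zero, mul_zero, coeff_C, if_pos rfl, zero_sub,
      dvd_neg] at h0
    exact hs i h0
  have hMfact : ∀ π ∈ Multiset.map q Finset.univ.val, Prime π ∧ ¬ C π ∣ p := by
    intro π hmem
    obtain ⟨i, _, rfl⟩ := Multiset.mem_map.mp hmem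
    exact ⟨hq i, hnd i⟩
  have cancel_b : ∀ u v : S[X], C b * u = p * v → p ∣ u := by
    intro u v h
    exact my_multiset_cancel p _ hMfact u v
      (by rwa [show (Multiset.map q Finset.univ.val).prod = b from rfl])
  have cancel_pow : ∀ k : ℕ, ∀ u v : S[X], C (b ^ k) * u = p * v → p ∣ u := by
    intro k
    induction k with
    | zero => intro u v h; rw [pow_zero, map_one, one_mul] at h; exact ⟨v, h⟩
    | succ k ih =>
      intro u v h
      rw [pow_succ, mul_comm (b ^ k) b, map_mul, mul_assoc] at h
      obtain ⟨w, hw⟩ := cancel_b _ _ h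
      exact ih u w hw
  set A := Localization.Away b with hA
  have hle : Submonoid.powers b ≤ nonZeroDivisors S :=
    powers_le_nonZeroDivisors_of_noZeroDivisors hb
  haveI : IsDomain A := IsLocalization.isDomain_of_le_nonZeroDivisors _ hle
  have hinj : Function.Injective (algebraMap S A) := IsLocalization.injective _ hle
  have hmapinj : Function.Injective (Polynomial.map (algebraMap S A)) :=
    Polynomial.map_injective _ hinj
  have hu : IsUnit (algebraMap S A b) :=
    IsLocalization.map_units A ⟨b, Submonoid.mem_powers b⟩
  have hone : (algebraMap S A b) * ((hu.unit⁻¹ : Aˣ) : A) = 1 := hu.mul_val_inv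
  have hform : p.map (algebraMap S A) =
      C (algebraMap S A b) * (X - C (((hu.unit⁻¹ : Aˣ) : A) * algebraMap S A s)) := by
    rw [hpdef, Polynomial.map_sub, Polynomial.map_mul, Polynomial.map_C, Polynomial.map_X,
      Polynomial.map_C, mul_sub, ← Polynomial.C_mul, ← mul_assoc, hone, one_mul]
  have hprimebar : Prime (p.map (algebraMap S A)) := by
    rw [hform]
    have h1 : Prime (X - C (((hu.unit⁻¹ : Aˣ) : A) * algebraMap S A s)) :=
      Polynomial.prime_X_sub_C _
    have h2 : IsUnit (C (algebraMap S A b) : A[X]) := Polynomial.isUnit_C.mpr hu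
    have hassoc : Associated (X - C (((hu.unit⁻¹ : Aˣ) : A) * algebraMap S A s))
        (C (algebraMap S A b) * (X - C (((hu.unit⁻¹ : Aˣ) : A) * algebraMap S A s))) :=
      ⟨h2.unit, by rw [h2.unit_spec]; ring⟩
    exact hassoc.prime_iff.mp h1
  have key : ∀ f : S[X], (p.map (algebraMap S A)) ∣ f.map (algebraMap S A) → p ∣ f := by
    rintro f ⟨h0, hh⟩
    obtain ⟨⟨d, hd⟩, hnorm⟩ :=
      IsLocalization.integerNormalization_map_to_map (Submonoid.powers b) h0
    obtain ⟨k, hk⟩ := hd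
    have heq : (C d * f).map (algebraMap S A) =
        (p * IsLocalization.integerNormalization (Submonoid.powers b) h0).map
          (algebraMap S A) := by
      rw [Polynomial.map_mul, Polynomial.map_C, hh, Polynomial.map_mul, hnorm,
        ← IsScalarTower.algebraMap_smul A d h0, Polynomial.smul_eq_C_mul]
      ring
    have heq2 : C d * f = p * IsLocalization.integerNormalization (Submonoid.powers b) h0 :=
      hmapinj heq
    rw [← hk] at heq2
    exact cancel_pow k f _ heq2
  refine ⟨hp0, Polynomial.not_isUnit_of_natDegree_pos p (by rw [hdeg]; norm_num), ?_⟩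
  rintro f g ⟨t, ht⟩
  have hdvd : (p.map (algebraMap S A)) ∣ (f.map (algebraMap S A)) * (g.map (algebraMap S A)) := by
    refine ⟨t.map (algebraMap S A), ?_⟩
    rw [← Polynomial.map_mul, ← Polynomial.map_mul, ht]
  rcases hprimebar.2.2 _ _ hdvd with h | h
  · exact Or.inl (key f h)
  · exact Or.inr (key g h)

theorem my_prime_mvX {R : Type*} [CommRing R] [IsDomain R] : ∀ {k : ℕ} (i : Fin k),
    Prime (MvPolynomial.X i : MvPolynomial (Fin k) R) := by
  intro k i
  match k, i with
  | k + 1, i =>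
    rw [← MulEquiv.prime_iff (MvPolynomial.renameEquiv R (Equiv.swap i 0)).toRingEquiv.toMulEquiv]
    show Prime ((MvPolynomial.renameEquiv R (Equiv.swap i 0)) (MvPolynomial.X i))
    rw [show (MvPolynomial.renameEquiv R (Equiv.swap i 0)) (MvPolynomial.X i) =
        MvPolynomial.X 0 by simp [MvPolynomial.renameEquiv_apply, MvPolynomial.rename_X]]
    rw [← MulEquiv.prime_iff (MvPolynomial.finSuccEquiv R k).toRingEquiv.toMulEquiv]
    show Prime ((MvPolynomial.finSuccEquiv R k) (MvPolynomial.X 0))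
    rw [MvPolynomial.finSuccEquiv_X_zero]
    exact Polynomial.prime_X

theorem my_finSuccEquiv_form (n : ℕ) {R : Type*} [CommRing R] (a : R) :
    (MvPolynomial.finSuccEquiv R n) ((∏ i, MvPolynomial.X i) - MvPolynomial.C a) =
      Polynomial.C (∏ i : Fin n, MvPolynomial.X i) * Polynomial.X
        - Polynomial.C (MvPolynomial.C a) := by
  rw [map_sub, map_prod, Fin.prod_univ_succ, MvPolynomial.finSuccEquiv_X_zero]
  have h2 : ∀ i : Fin n, (MvPolynomial.finSuccEquiv R n) (MvPolynomial.X i.succ) =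
      Polynomial.C (MvPolynomial.X i) := fun i => MvPolynomial.finSuccEquiv_X_succ
  have h3 : (MvPolynomial.finSuccEquiv R n) (MvPolynomial.C a) =
      Polynomial.C (MvPolynomial.C a) := by simp [MvPolynomial.finSuccEquiv_apply]
  simp_rw [h2, h3]
  rw [← map_prod (Polynomial.C : MvPolynomial (Fin n) R →+* _) _ Finset.univ]
  ring

/-- The Laurent polynomial ring `ℂ[u₁^{±1},…,uₘ^{±1}]` in `m` variables. -/
abbrev LaurentRing (m : ℕ) : Type := AddMonoidAlgebra ℂ (Fin m →₀ ℤ)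

/-- The variable `uⱼ` in the Laurent polynomial ring. -/
noncomputable def laurentVar (m : ℕ) (j : Fin m) : LaurentRing m :=
  AddMonoidAlgebra.single (Finsupp.single j (1 : ℤ)) (1 : ℂ)

/-- The polynomial `z₀⋯zₙ - (1 + u₁ + ⋯ + uₘ)` in
`ℂ[z₀,…,zₙ,u₁^{±1},…,uₘ^{±1}]`. -/
noncomputable def clusterPoly (n m : ℕ) :
    MvPolynomial (Fin (n + 1)) (LaurentRing m) :=
  (∏ i, MvPolynomial.X i) - MvPolynomial.C (1 + ∑ j, laurentVar m j)

/-- `z₀⋯zₙ - (1 + u₁ + ⋯ + uₘ)` is irreducible in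
`ℂ[z₀,…,zₙ,u₁^{±1},…,uₘ^{±1}]` (for `m ≥ 1`), and the quotient by the ideal it
generates is an integral domain. -/
theorem stmt_1 (n m : ℕ) (hm : 1 ≤ m) :
    Irreducible (clusterPoly n m) ∧
    IsDomain (MvPolynomial (Fin (n + 1)) (LaurentRing m) ⧸
      Ideal.span {clusterPoly n m}) := by
  classical
  haveI : IsDomain (LaurentRing m) := NoZeroDivisors.to_isDomain _
  set R := LaurentRing m with hR
  set a : R := 1 + ∑ j, laurentVar m j with hadef
  have ha : a ≠ 0 := by
    intro h
    have h2 := congrArg (AddMonoidAlgebra.lift ℂ ℂ (Fin m →₀ ℤ) 1) h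
    simp only [hadef, laurentVar, map_add, map_one, map_sum, AddMonoidAlgebra.lift_single,
      map_zero] at h2
    simp at h2
    rw [add_comm] at h2
    exact Nat.cast_add_one_ne_zero m h2
  have hCa : ∀ i : Fin n, ¬ (MvPolynomial.X i ∣ (MvPolynomial.C a : MvPolynomial (Fin n) R)) := by
    rintro i ⟨t, ht⟩
    have h3 := congrArg MvPolynomial.constantCoeff ht
    simp only [MvPolynomial.constantCoeff_C, map_mul, MvPolynomial.constantCoeff_X,
      zero_mul] at h3
    exact ha h3
  have hprime : Prime (clusterPoly n m) := by
    rw [← MulEquiv.prime_iff (MvPolynomial.finSuccEquiv R n).toRingEquiv.toMulEquiv]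
    show Prime ((MvPolynomial.finSuccEquiv R n) (clusterPoly n m))
    rw [show clusterPoly n m = (∏ i, MvPolynomial.X i) - MvPolynomial.C a from rfl]
    rw [my_finSuccEquiv_form n a]
    exact my_prime_linear _ (fun i => my_prime_mvX i) _ hCa
  refine ⟨hprime.irreducible, ?_⟩
  haveI : (Ideal.span {clusterPoly n m}).IsPrime :=
    (Ideal.span_singleton_prime hprime.ne_zero).mpr hprime
  exact Ideal.Quotient.isDomain _
end

section
/- Let $R = \mathbb{C}[z_1,\ldots,z_n,u_1^{\pm 1},\ldots,u_m^{\pm 1}]$, $f = z_1\cdots z_n$, and $g = 1 + u_1 + \cdots + u_m$. Then the quotient ring $R[z_0]/(z_0 f - g)$ is isomorphic to the $R$-subalgebra of the localization $R[f^{-1}]$ generated by the element $g/f$. -/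
open Polynomial

/-- The Laurent polynomial ring `ℂ[u₁^{±1},…,uₘ^{±1}]` in `m` variables. -/
def LaurentRingC (m : ℕ) : Type := AddMonoidAlgebra ℂ (Fin m →₀ ℤ)

noncomputable instance (m : ℕ) : CommRing (LaurentRingC m) :=
  inferInstanceAs (CommRing (AddMonoidAlgebra ℂ (Fin m →₀ ℤ)))

/-- The variable `uⱼ` of the Laurent polynomial ring. -/
noncomputable def uVar (m : ℕ) (j : Fin m) : LaurentRingC m :=
  AddMonoidAlgebra.single (Finsupp.single j (1 : ℤ)) (1 : ℂ)

/-- The coordinate ring `R = ℂ[z₁,…,zₙ,u₁^{±1},…,uₘ^{±1}]` of `ℂⁿ × (ℂˣ)ᵐ`. -/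
abbrev BaseRing (n m : ℕ) : Type := MvPolynomial (Fin n) (LaurentRingC m)

/-- `f = z₁⋯zₙ`. -/
noncomputable def fElt (n m : ℕ) : BaseRing n m := ∏ i, MvPolynomial.X i

/-- `g = 1 + u₁ + ⋯ + uₘ`. -/
noncomputable def gElt (n m : ℕ) : BaseRing n m :=
  MvPolynomial.C (1 + ∑ j, uVar m j)


instance (m : ℕ) : NoZeroDivisors (LaurentRingC m) :=
  inferInstanceAs (NoZeroDivisors (AddMonoidAlgebra ℂ (Fin m →₀ ℤ)))
instance (m : ℕ) : Nontrivial (LaurentRingC m) :=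
  inferInstanceAs (Nontrivial (AddMonoidAlgebra ℂ (Fin m →₀ ℤ)))
instance (m : ℕ) : IsDomain (LaurentRingC m) := NoZeroDivisors.to_isDomain _

lemma cNe (m : ℕ) : (1 + ∑ j, uVar m j : LaurentRingC m) ≠ 0 := by
  intro h
  have := congrArg (AddMonoidAlgebra.lift ℂ ℂ (Fin m →₀ ℤ) (1 : Multiplicative (Fin m →₀ ℤ) →* ℂ)) h
  erw [map_add, map_sum, map_one, map_zero] at this
  simp [uVar, AddMonoidAlgebra.lift_single] at this
  exact Nat.cast_add_one_ne_zero m (by linear_combination this)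

lemma prodX {n : ℕ} {L : Type*} [CommSemiring L] (s : Finset (Fin n)) :
    ∏ i ∈ s, (MvPolynomial.X i : MvPolynomial (Fin n) L)
      = MvPolynomial.monomial (∑ i ∈ s, Finsupp.single i 1) 1 := by
  induction s using Finset.induction with
  | empty => simp
  | insert _ _ h ih =>
      rw [Finset.prod_insert h, Finset.sum_insert h, ih, MvPolynomial.X,
        MvPolynomial.monomial_mul, one_mul]

lemma fElt_eq (n m : ℕ) :
    fElt n m = MvPolynomial.monomial (∑ i, Finsupp.single i 1) (1 : LaurentRingC m) :=
  prodX _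

lemma fElt_ne_zero (n m : ℕ) : fElt n m ≠ 0 := by
  simp [fElt_eq, MvPolynomial.monomial_eq_zero]

lemma monomial_dvd_of_dvd_C_mul {σ : Type*} {L : Type*} [CommRing L] [NoZeroDivisors L]
    {c : L} (hc : c ≠ 0) {d : σ →₀ ℕ} {p : MvPolynomial σ L}
    (h : MvPolynomial.monomial d 1 ∣ MvPolynomial.C c * p) :
    MvPolynomial.monomial d 1 ∣ p := by
  rw [MvPolynomial.monomial_one_dvd_iff_modMonomial_eq_zero] at h ⊢
  ext e
  by_cases hde : d ≤ e
  · rw [MvPolynomial.coeff_modMonomial_of_le _ hde, MvPolynomial.coeff_zero]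
  · rw [MvPolynomial.coeff_modMonomial_of_not_le _ hde, MvPolynomial.coeff_zero]
    have h2 := congrArg (MvPolynomial.coeff e) h
    rw [MvPolynomial.coeff_modMonomial_of_not_le _ hde, MvPolynomial.coeff_C_mul,
      MvPolynomial.coeff_zero] at h2
    exact (mul_eq_zero.mp h2).resolve_left hc

lemma fElt_dvd_cancel {n m : ℕ} {p : BaseRing n m} (h : fElt n m ∣ gElt n m * p) :
    fElt n m ∣ p := by
  rw [fElt_eq] at h ⊢
  exact monomial_dvd_of_dvd_C_mul (cNe m) (by rwa [gElt] at h)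

noncomputable def wPoly (n m : ℕ) : Polynomial (BaseRing n m) :=
  X * C (fElt n m) - C (gElt n m)

/-- Division with remainder after clearing denominators. -/
lemma claimA {n m : ℕ} (P : Polynomial (BaseRing n m)) :
    ∃ (N : ℕ) (Q : Polynomial (BaseRing n m)) (r : BaseRing n m),
      C (fElt n m) ^ N * P = Q * wPoly n m + C r := by
  induction P using Polynomial.induction_on' with
  | add p q hp hq =>
      obtain ⟨N1, Q1, r1, e1⟩ := hp
      obtain ⟨N2, Q2, r2, e2⟩ := hq
      refine ⟨N1 + N2, C (fElt n m) ^ N2 * Q1 + C (fElt n m) ^ N1 * Q2,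
        fElt n m ^ N2 * r1 + fElt n m ^ N1 * r2, ?_⟩
      have : C (fElt n m) ^ (N1 + N2) * (p + q)
          = C (fElt n m) ^ N2 * (C (fElt n m) ^ N1 * p)
            + C (fElt n m) ^ N1 * (C (fElt n m) ^ N2 * q) := by ring
      rw [this, e1, e2]
      simp only [map_add, map_mul, map_pow]
      ring
  | monomial k a =>
      obtain ⟨Q0, hQ0⟩ := sub_dvd_pow_sub_pow (C (fElt n m) * X) (C (gElt n m)) k
      refine ⟨k, C a * Q0, a * gElt n m ^ k, ?_⟩
      rw [← Polynomial.C_mul_X_pow_eq_monomial, wPoly]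
      simp only [map_mul, map_pow]
      linear_combination (C a : Polynomial (BaseRing n m)) * hQ0

lemma claimB {n m : ℕ} : ∀ (N : ℕ) (P Q : Polynomial (BaseRing n m)),
    C (fElt n m) ^ N * P = Q * wPoly n m → wPoly n m ∣ P := by
  intro N
  induction N with
  | zero => intro P Q h; rw [pow_zero, one_mul] at h; exact ⟨Q, by rw [h, mul_comm]⟩
  | succ N ih =>
      intro P Q h
      -- show C f ∣ Q by reducing mod f
      set π : BaseRing n m →+* BaseRing n m ⧸ Ideal.span {fElt n m} :=
        Ideal.Quotient.mk (Ideal.span {fElt n m}) with hπ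
      have hπf : π (fElt n m) = 0 := by
        rw [Ideal.Quotient.eq_zero_iff_mem]
        exact Ideal.mem_span_singleton_self _
      have hmap := congrArg (Polynomial.map π) h
      rw [Polynomial.map_mul, Polynomial.map_mul, Polynomial.map_pow, Polynomial.map_C,
        hπf] at hmap
      rw [wPoly, Polynomial.map_sub, Polynomial.map_mul, Polynomial.map_C, Polynomial.map_C,
        Polynomial.map_X, hπf] at hmap
      have hQ0 : C (π (gElt n m)) * (Q.map π) = 0 := by
        rw [map_zero] at hmap
        have : (0:Polynomial (BaseRing n m ⧸ Ideal.span {fElt n m})) ^ (N+1) * P.map π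
            = Q.map π * (X * 0 - C (π (gElt n m))) := hmap
        rw [zero_pow (Nat.succ_ne_zero N), zero_mul] at this
        linear_combination this
      have hCfQ : C (fElt n m) ∣ Q := by
        rw [Polynomial.C_dvd_iff_dvd_coeff]
        intro i
        have := congrArg (fun p => Polynomial.coeff p i) hQ0
        simp only [Polynomial.coeff_C_mul, Polynomial.coeff_map, Polynomial.coeff_zero] at this
        rw [← map_mul] at this
        rw [hπ, Ideal.Quotient.eq_zero_iff_mem, Ideal.mem_span_singleton] at this
        exact fElt_dvd_cancel this
      obtain ⟨Q', rfl⟩ := hCfQ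
      apply ih P Q'
      have hreg : (C (fElt n m) : Polynomial (BaseRing n m)) ≠ 0 := by
        simpa using fElt_ne_zero n m
      apply mul_left_cancel₀ hreg
      rw [← mul_assoc, ← pow_succ']
      rw [h]; ring

lemma aeval_w {n m : ℕ} :
    Polynomial.aeval
      (algebraMap (BaseRing n m) (Localization.Away (fElt n m)) (gElt n m) *
        IsLocalization.Away.invSelf (fElt n m)) (wPoly n m) = 0 := by
  rw [wPoly]
  simp only [map_sub, map_mul, Polynomial.aeval_X, Polynomial.aeval_C]
  rw [mul_assoc, mul_comm (IsLocalization.Away.invSelf (fElt n m)),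
    IsLocalization.Away.mul_invSelf, mul_one, sub_self]

set_option synthInstance.maxHeartbeats 400000

/-- The quotient `R[z₀]/(z₀f - g)` is isomorphic, as an `R`-algebra, to the
`R`-subalgebra of the localization `R[f⁻¹]` generated by the element `g/f`. -/
theorem stmt_2 (n m : ℕ) :
    Nonempty
      ((Polynomial (BaseRing n m) ⧸
          Ideal.span
            {(X * C (fElt n m) - C (gElt n m) : Polynomial (BaseRing n m))}) ≃ₐ[BaseRing n m]
        Algebra.adjoin (BaseRing n m)
          {algebraMap (BaseRing n m) (Localization.Away (fElt n m)) (gElt n m) *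
            IsLocalization.Away.invSelf (fElt n m)}) := by

  set t : Localization.Away (fElt n m) :=
    algebraMap (BaseRing n m) (Localization.Away (fElt n m)) (gElt n m) *
      IsLocalization.Away.invSelf (fElt n m) with ht
  have hker : RingHom.ker (Polynomial.aeval t :
      Polynomial (BaseRing n m) →ₐ[BaseRing n m] Localization.Away (fElt n m))
      = Ideal.span {wPoly n m} := by
    apply le_antisymm
    · intro P hP
      rw [RingHom.mem_ker] at hP
      obtain ⟨N, Q, r, hA⟩ := claimA P
      have haw : Polynomial.aeval t (wPoly n m) = 0 := aeval_w
      have := congrArg (Polynomial.aeval t) hA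
      simp only [map_add, map_mul, map_pow, Polynomial.aeval_C, haw, mul_zero,
        zero_add] at this
      rw [hP, mul_zero] at this
      have hr0 : algebraMap (BaseRing n m) (Localization.Away (fElt n m)) r = 0 := this.symm
      rw [IsLocalization.map_eq_zero_iff (Submonoid.powers (fElt n m))] at hr0
      obtain ⟨⟨s, k, rfl⟩, hs⟩ := hr0
      have hr : r = 0 := by
        have hf : fElt n m ^ k ≠ 0 := pow_ne_zero _ (fElt_ne_zero n m)
        exact (mul_eq_zero.mp hs).resolve_left hf
      rw [hr, map_zero, add_zero] at hA
      rw [Ideal.mem_span_singleton]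
      exact claimB N P Q hA
    · rw [Ideal.span_le, Set.singleton_subset_iff, SetLike.mem_coe, RingHom.mem_ker]
      exact aeval_w
  have hw : wPoly n m = X * C (fElt n m) - C (gElt n m) := rfl
  have hrange : Algebra.adjoin (BaseRing n m) {t} = (Polynomial.aeval t).range :=
    Algebra.adjoin_singleton_eq_range_aeval _ _
  exact ⟨((Ideal.quotientEquivAlgOfEq (BaseRing n m)
      (I := Ideal.span {(X * C (fElt n m) - C (gElt n m) : Polynomial (BaseRing n m))}) (by rw [← hw, ← hker])).trans
      (Ideal.quotientKerEquivRange (Polynomial.aeval t))).trans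
    (Subalgebra.equivOfEq _ _ hrange.symm)⟩
end
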